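/- Let R be a commutative ring with unity, G = ⟨x | x^n = 1⟩ a cyclic group of order n, and σ, τ the R-algebra endomorphisms of RG with σ(x) = x^u and τ(x) = x^{u+v}, where u, v ∈ {0, 1, …, n−1} and v ≠ 0. Let D : RG → RG be a (σ,τ)-derivation, write D(x) = Σ_{i=0}^{n−1} c_i x^i with c_i ∈ R, and set d = gcd(v,n) and m = n/d. Then D is inner if and only if the following d equations hold simultaneously: Σ_{j=0}^{m−1} c_{i+jd} = 0 for every i ∈ {0, 1, …, d−1}. -/

import Mathlib

/-!
A `(σ, τ)`-derivation of `RG` is determined by its value at the generator `x`, and the inner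
ones are exactly those with `D x ∈ (τ x - σ x) = (x^u (x^v - 1)) = (x^v - 1)`, since `x` is a
unit. As `x^n = 1`, this ideal equals `(x^d - 1)` with `d = gcd(v, n)`. Modulo `x^d - 1` every
`x^k` reduces to `x^(k mod d)`, so it suffices that the coefficient sums over the residue
classes mod `d` vanish; conversely, these sums are the coefficients of the image of `D x`
under the map `R[ℤ/n] → R[ℤ/d]`, which kills `x^d - 1`.
-/

/-- The generator `x` of the cyclic group of order `n`, viewed inside the group ring
`R[Multiplicative (ZMod n)]`. -/
noncomputable def xgen (R : Type*) [CommRing R] (n : ℕ) :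
    MonoidAlgebra R (Multiplicative (ZMod n)) :=
  MonoidAlgebra.of R (Multiplicative (ZMod n)) (Multiplicative.ofAdd (1 : ZMod n))

open MonoidAlgebra

section TwistedDerivation

variable {R A : Type*} [CommRing R] [CommRing A] [Algebra R A] {σ τ : A →ₐ[R] A}
  {D : A →ₗ[R] A}

theorem map_one_eq_zero_of_twisted_leibniz (hD : ∀ a b, D (a * b) = D a * τ b + σ a * D b) :
    D 1 = 0 := by
  simpa using hD 1 1

theorem exists_eq_mul_sub_iff_mem_span_of_adjoin_eq_top
    (hD : ∀ a b, D (a * b) = D a * τ b + σ a * D b) {x : A} (hx : Algebra.adjoin R {x} = ⊤) :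
    (∃ β, ∀ a, D a = β * (τ a - σ a)) ↔ D x ∈ Ideal.span {τ x - σ x} := by
  refine ⟨fun ⟨β, hβ⟩ => Ideal.mem_span_singleton'.2 ⟨β, (hβ x).symm⟩, fun h => ?_⟩
  obtain ⟨β, hβ⟩ := Ideal.mem_span_singleton'.1 h
  refine ⟨β, fun a => ?_⟩
  have ha : a ∈ Algebra.adjoin R {x} := hx ▸ Algebra.mem_top
  induction ha using Algebra.adjoin_induction with
  | mem y hy => rw [Set.mem_singleton_iff.1 hy, hβ]
  | algebraMap r =>
    rw [Algebra.algebraMap_eq_smul_one, map_smul, map_smul, map_smul,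
      map_one_eq_zero_of_twisted_leibniz hD, map_one, map_one, sub_self, smul_zero, mul_zero]
  | add y z _ _ hy hz => rw [map_add, map_add, map_add, hy, hz]; ring
  | mul y z _ _ hy hz => rw [hD, map_mul, map_mul, hy, hz]; ring

end TwistedDerivation

theorem Ideal.pow_sub_one_mem_iff {A : Type*} [CommRing A] {I : Ideal A} {x : A} {k : ℕ} :
    x ^ k - 1 ∈ I ↔ Ideal.Quotient.mk I x ^ k = 1 := by
  rw [← Ideal.Quotient.eq_zero_iff_mem, map_sub, map_pow, map_one, sub_eq_zero]

theorem Ideal.span_pow_sub_one_eq_span_pow_gcd_sub_one {A : Type*} [CommRing A] {x : A} {n : ℕ}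
    (hx : x ^ n = 1) (v : ℕ) : Ideal.span {x ^ v - 1} = Ideal.span {x ^ v.gcd n - 1} := by
  apply le_antisymm <;> rw [Ideal.span_singleton_le_iff_mem, Ideal.pow_sub_one_mem_iff]
  · exact (pow_gcd_eq_one.1 (Ideal.pow_sub_one_mem_iff.1 (Ideal.mem_span_singleton_self _))).1
  · exact pow_gcd_eq_one.2 ⟨Ideal.pow_sub_one_mem_iff.1 (Ideal.mem_span_singleton_self _),
      by rw [← map_pow, hx, map_one]⟩

section CyclicGroupRing

variable {R : Type*} [CommRing R] {n : ℕ}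

theorem xgen_pow (k : ℕ) :
    xgen R n ^ k = of R (Multiplicative (ZMod n)) (Multiplicative.ofAdd (k : ZMod n)) := by
  rw [xgen, ← map_pow, ← ofAdd_nsmul, nsmul_one]

theorem xgen_pow_self : xgen R n ^ n = 1 := by
  rw [xgen_pow, ZMod.natCast_self, ofAdd_zero, map_one]

theorem of_eq_xgen_pow [NeZero n] (g : Multiplicative (ZMod n)) :
    of R _ g = xgen R n ^ (Multiplicative.toAdd g).val := by
  rw [xgen_pow, ZMod.natCast_zmod_val, ofAdd_toAdd]

theorem adjoin_xgen [NeZero n] : Algebra.adjoin R {xgen R n} = ⊤ := by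
  refine Algebra.eq_top_iff.2 fun a => ?_
  induction a using MonoidAlgebra.induction_on with
  | of g =>
    rw [of_eq_xgen_pow]
    exact pow_mem (Algebra.self_mem_adjoin_singleton R _) _
  | add a b ha hb => exact add_mem ha hb
  | smul r a ha => exact Subalgebra.smul_mem _ ha r

theorem sum_filter_val_mod_eq_sum_range [NeZero n] {d i : ℕ} (hdn : d ∣ n) (hi : i < d)
    (c : ZMod n → R) :
    ∑ k with k.val % d = i, c k =
      ∑ j ∈ Finset.range (n / d), c ((i + j * d : ℕ) : ZMod n) := by
  have hval : ∀ j < n / d, ((i + j * d : ℕ) : ZMod n).val = i + j * d := fun j hj =>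
    ZMod.val_cast_of_lt (by
      calc i + j * d < (j + 1) * d := by linarith
        _ ≤ n / d * d := Nat.mul_le_mul_right d hj
        _ = n := Nat.div_mul_cancel hdn)
  have hinv : ∀ k : ZMod n, k.val % d = i → ((i + k.val / d * d : ℕ) : ZMod n) = k := by
    intro k hk
    rw [← hk, Nat.mod_add_div', ZMod.natCast_zmod_val]
  refine Finset.sum_bij' (fun k _ => k.val / d) (fun j _ => ((i + j * d : ℕ) : ZMod n))
    (fun k _ => Finset.mem_range.2 (Nat.div_lt_div_of_lt_of_dvd hdn (ZMod.val_lt k)))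
    (fun j hj => ?_) (fun k hk => hinv k (Finset.mem_filter.1 hk).2) (fun j hj => ?_)
    (fun k hk => by rw [hinv k (Finset.mem_filter.1 hk).2])
  all_goals rw [Finset.mem_range] at hj
  · exact Finset.mem_filter.2 ⟨Finset.mem_univ _,
      by rw [hval j hj, Nat.add_mul_mod_self_right, Nat.mod_eq_of_lt hi]⟩
  · rw [hval j hj, Nat.add_mul_div_right _ _ (by omega), Nat.div_eq_of_lt hi, zero_add]

theorem mapDomainAlgHom_castHom_xgen {d : ℕ} (hdn : d ∣ n) :
    mapDomainAlgHom R R (ZMod.castHom hdn (ZMod d)).toAddMonoidHom.toMultiplicative (xgen R n)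
      = xgen R d := by
  simp [xgen, ZMod.cast_one hdn]

theorem sum_filter_val_mod_eq_zero_of_mem_span [NeZero n] {d : ℕ} (hdn : d ∣ n) {c : ZMod n → R}
    (h : ∑ k, c k • xgen R n ^ k.val ∈ Ideal.span {xgen R n ^ d - 1}) {i : ℕ} (hi : i < d) :
    ∑ k with k.val % d = i, c k = 0 := by
  obtain ⟨b, hb⟩ := Ideal.mem_span_singleton'.1 h
  have hπ := congrArg
    (mapDomainAlgHom R R (ZMod.castHom hdn (ZMod d)).toAddMonoidHom.toMultiplicative) hb
  rw [map_mul, map_sub, map_pow, map_one, mapDomainAlgHom_castHom_xgen, xgen_pow_self, sub_self,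
    mul_zero, map_sum] at hπ
  simp only [map_smul, map_pow, mapDomainAlgHom_castHom_xgen] at hπ
  have hcoeff := congrArg (fun a => a.coeff (Multiplicative.ofAdd (i : ZMod d))) hπ
  simp only [coeff_zero, Finsupp.coe_zero, Pi.zero_apply, coeff_sum, Finsupp.finsetSum_apply,
    coeff_smul_apply, xgen_pow, of_apply, coeff_single, Finsupp.single_apply,
    EmbeddingLike.apply_eq_iff_eq, ZMod.natCast_eq_natCast_iff', Nat.mod_eq_of_lt hi,
    smul_eq_mul, mul_ite, mul_one, mul_zero] at hcoeff
  rw [Finset.sum_filter, ← hcoeff]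

theorem mem_span_of_sum_filter_val_mod_eq_zero [NeZero n] {d : ℕ} (hdn : d ∣ n)
    {c : ZMod n → R} (h : ∀ i < d, ∑ k with k.val % d = i, c k = 0) :
    ∑ k, c k • xgen R n ^ k.val ∈ Ideal.span {xgen R n ^ d - 1} := by
  have hd : 0 < d := Nat.pos_of_dvd_of_pos hdn (NeZero.pos n)
  set I := Ideal.span {xgen R n ^ d - 1}
  set y := Ideal.Quotient.mkₐ R I (xgen R n)
  have hy : y ^ d = 1 := Ideal.pow_sub_one_mem_iff.1 (Ideal.mem_span_singleton_self _)
  rw [← Ideal.Quotient.eq_zero_iff_mem, ← Ideal.Quotient.mkₐ_eq_mk R]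
  calc Ideal.Quotient.mkₐ R I (∑ k, c k • xgen R n ^ k.val)
      = ∑ k, c k • y ^ (k.val % d) := by
        simp only [map_sum, map_smul, map_pow, ← pow_eq_pow_mod _ hy, y]
    _ = ∑ i ∈ Finset.range d, (∑ k with k.val % d = i, c k) • y ^ i := by
        rw [← Finset.sum_fiberwise_of_maps_to (fun k _ => Finset.mem_range.2 (Nat.mod_lt _ hd))]
        refine Finset.sum_congr rfl fun i _ => ?_
        rw [Finset.sum_smul]
        exact Finset.sum_congr rfl fun k hk => by rw [(Finset.mem_filter.1 hk).2]
    _ = 0 := Finset.sum_eq_zero fun i hi => by rw [h i (Finset.mem_range.1 hi), zero_smul]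

theorem sum_smul_xgen_pow_mem_span_iff [NeZero n] {d : ℕ} (hdn : d ∣ n) (c : ZMod n → R) :
    ∑ k, c k • xgen R n ^ k.val ∈ Ideal.span {xgen R n ^ d - 1} ↔
      ∀ i < d, ∑ k with k.val % d = i, c k = 0 :=
  ⟨fun h _ hi => sum_filter_val_mod_eq_zero_of_mem_span hdn h hi,
    mem_span_of_sum_filter_val_mod_eq_zero hdn⟩

end CyclicGroupRing

theorem stmt9_general {R : Type*} [CommRing R] (n u v : ℕ) [NeZero n]
    (σ τ : MonoidAlgebra R (Multiplicative (ZMod n)) →ₐ[R] MonoidAlgebra R (Multiplicative (ZMod n)))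
    (hσ : σ (xgen R n) = xgen R n ^ u) (hτ : τ (xgen R n) = xgen R n ^ (u + v))
    (D : MonoidAlgebra R (Multiplicative (ZMod n)) →ₗ[R] MonoidAlgebra R (Multiplicative (ZMod n)))
    (hD : ∀ a b, D (a * b) = D a * τ b + σ a * D b)
    (c : ZMod n → R) (hc : D (xgen R n) = ∑ i : ZMod n, c i • xgen R n ^ i.val) :
    (∃ β, ∀ a, D a = β * (τ a - σ a)) ↔
    ∀ i : ℕ, i < Nat.gcd v n →
      ∑ j ∈ Finset.range (n / Nat.gcd v n), c ((i + j * Nat.gcd v n : ℕ) : ZMod n) = 0 := by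
  have hdn : Nat.gcd v n ∣ n := Nat.gcd_dvd_right v n
  have hx : IsUnit (xgen R n) := .of_pow_eq_one xgen_pow_self (NeZero.ne n)
  have hspan : Ideal.span {τ (xgen R n) - σ (xgen R n)} =
      Ideal.span {xgen R n ^ Nat.gcd v n - 1} := by
    rw [hσ, hτ, pow_add, ← mul_sub_one, Ideal.span_singleton_mul_left_unit (hx.pow u),
      Ideal.span_pow_sub_one_eq_span_pow_gcd_sub_one xgen_pow_self]
  rw [exists_eq_mul_sub_iff_mem_span_of_adjoin_eq_top hD adjoin_xgen, hspan, hc,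
    sum_smul_xgen_pow_mem_span_iff hdn]
  exact forall₂_congr fun i hi => by rw [sum_filter_val_mod_eq_sum_range hdn hi]

/-- Let `σ, τ` be the `R`-algebra endomorphisms of the group ring of
`⟨x | x^n = 1⟩` with `σ x = x^u`, `τ x = x^{u+v}` (`u, v < n`, `v ≠ 0`), let `D` be a
`(σ,τ)`-derivation with `D x = Σ c_i x^i`, and set `d = gcd(v,n)`, `m = n/d`. Then `D`
is inner iff `Σ_{j=0}^{m−1} c_{i+jd} = 0` for every `i ∈ {0,…,d−1}`. -/
theorem stmt9 {R : Type*} [CommRing R] (n u v : ℕ) [NeZero n]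
    (hu : u < n) (hv : v < n) (hv0 : v ≠ 0)
    (σ τ : MonoidAlgebra R (Multiplicative (ZMod n)) →ₐ[R] MonoidAlgebra R (Multiplicative (ZMod n)))
    (hσ : σ (xgen R n) = xgen R n ^ u) (hτ : τ (xgen R n) = xgen R n ^ (u + v))
    (D : MonoidAlgebra R (Multiplicative (ZMod n)) →ₗ[R] MonoidAlgebra R (Multiplicative (ZMod n)))
    (hD : ∀ a b, D (a * b) = D a * τ b + σ a * D b)
    (c : ZMod n → R) (hc : D (xgen R n) = ∑ i : ZMod n, c i • xgen R n ^ i.val) :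
    (∃ β, ∀ a, D a = β * (τ a - σ a)) ↔
    ∀ i : ℕ, i < Nat.gcd v n →
      ∑ j ∈ Finset.range (n / Nat.gcd v n), c ((i + j * Nat.gcd v n : ℕ) : ZMod n) = 0 :=
  stmt9_general n u v σ τ hσ hτ D hD c hc
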